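/- Let k ≥ 3 and let G be a mono-C3-free edge-colored complete graph K_n. Let ℓ_1 ≥ ℓ_2 ≥ ⋯ ≥ ℓ_k be positive integers with ℓ_1 ≥ 2 and ℓ_1 + ℓ_2 + ⋯ + ℓ_k = n − 1. If G contains a nice octopus O*_{ℓ_2,…,ℓ_k}, then G contains a properly colored spanning k-spider with legs of lengths ℓ_1, ℓ_2, …, ℓ_k. -/

import Mathlib

/-!
The vertices off the legs `M 2, …, M k` are `v`, `a`, `b` and `ℓ 1 - 2` others, so the octopus
extends to the required spider once they are listed as a properly colored path `v p …` with
`p ∈ {a, b}`: the color of `v p` is that of `v a` or `v b`, which the shovels keep apart from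
the first colors of the other legs.

Such a path exists whenever `ab` is a center edge of the triangle `v a b`, by induction on the
vertex set. If a further vertex `w` has `c b w = c a b`, then `c a w ≠ c a b` as `a b w` is not
monochromatic, so `aw` is a center edge of `b a w`; a path `b p' …` with `p' ∈ {a, w}` on the
vertices other than `v` starts with the color `c a b`, hence `v b p' …` is properly colored.
Otherwise `c b u ≠ c a b` for all remaining `u`, and each of them is inserted into `v a b …`
right after the first `y` (from `b` on) whose successor `z` has `c u z = c y z`, or at the end:
the invariant `c y u ≠ c x y` for the predecessor `x` of `y`, and `y u z` not being
monochromatic, keep the path proper.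
-/

/-- An edge-coloring of `K_n` (on vertex set `Fin n`) has no monochromatic triangle. -/
def MonoC3Free (n : ℕ) (c : Fin n → Fin n → ℕ) : Prop :=
  ∀ u v w : Fin n, u ≠ v → v ≠ w → u ≠ w → ¬(c u v = c v w ∧ c u v = c u w)

/-- `(v, L)` is a properly colored spanning `k`-spider in the edge-colored `K_n` with
legs of lengths `ℓ 1, …, ℓ k`: `L i 0, L i 1, …, L i (ℓ i)` is the `i`-th leg
(`1 ≤ i ≤ k`), each leg starts at the center `v`, the legs are internally disjoint and
together cover all `n` vertices, each leg is a properly colored path, and the `k` leg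
edges at the center have pairwise distinct colors. -/
def IsPCSpanningSpider (n k : ℕ) (c : Fin n → Fin n → ℕ) (ℓ : ℕ → ℕ)
    (v : Fin n) (L : ℕ → ℕ → Fin n) : Prop :=
  (∀ i, 1 ≤ i → i ≤ k → L i 0 = v) ∧
  (∀ i, 1 ≤ i → i ≤ k → Set.InjOn (L i) (Set.Iic (ℓ i))) ∧
  (∀ i i', 1 ≤ i → i ≤ k → 1 ≤ i' → i' ≤ k → i ≠ i' →
    ∀ j j', 1 ≤ j → j ≤ ℓ i → 1 ≤ j' → j' ≤ ℓ i' → L i j ≠ L i' j') ∧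
  (∀ x : Fin n, ∃ i j, 1 ≤ i ∧ i ≤ k ∧ j ≤ ℓ i ∧ L i j = x) ∧
  (∀ i, 1 ≤ i → i ≤ k → ∀ j : ℕ, j + 2 ≤ ℓ i →
    c (L i j) (L i (j + 1)) ≠ c (L i (j + 1)) (L i (j + 2))) ∧
  (∀ i i', 1 ≤ i → i ≤ k → 1 ≤ i' → i' ≤ k → i ≠ i' → c v (L i 1) ≠ c v (L i' 1))

def IsPCWalk {V C : Type*} (c : V → V → C) : List V → Prop
  | x :: y :: z :: l => c x y ≠ c y z ∧ IsPCWalk c (y :: z :: l)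
  | _ => True

section Walk

variable {V C : Type*} {c : V → V → C}

@[simp] theorem isPCWalk_pair (x y : V) : IsPCWalk c [x, y] := trivial

theorem IsPCWalk.of_cons_of_color_eq {u y z : V} {l : List V} (h : IsPCWalk c (y :: z :: l))
    (hc : c u z = c y z) : IsPCWalk c (u :: z :: l) := by
  cases l with
  | nil => trivial
  | cons w l => exact ⟨hc ▸ h.1, h.2⟩

theorem IsPCWalk.getD (d : V) : ∀ {l : List V}, IsPCWalk c l → ∀ j, j + 2 < l.length →
    c (l.getD j d) (l.getD (j + 1) d) ≠ c (l.getD (j + 1) d) (l.getD (j + 2) d)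
  | _ :: _ :: _ :: _, h, 0, _ => h.1
  | _ :: y :: z :: l, h, j + 1, hj =>
    IsPCWalk.getD d (l := y :: z :: l) h.2 j (by simp only [List.length_cons] at hj ⊢; omega)
  | [], _, _, hj | [_], _, _, hj | [_, _], _, _, hj => by simp at hj

theorem List.getD_mem_of_lt {l : List V} {j : ℕ} (hj : j < l.length) (d : V) :
    l.getD j d ∈ l := by
  rw [List.getD_eq_getElem _ _ hj]
  exact List.getElem_mem hj

theorem List.Nodup.injOn_getD {l : List V} (hl : l.Nodup) (d : V) :
    Set.InjOn (l.getD · d) (Set.Iio l.length) := fun i hi j hj h => by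
  rw [Set.mem_Iio] at hi hj
  simp only [List.getD_eq_getElem _ _ hi, List.getD_eq_getElem _ _ hj] at h
  exact hl.getElem_inj_iff.1 h

end Walk

section CenterEdge

variable {n : ℕ} {c : Fin n → Fin n → ℕ}

theorem IsPCWalk.exists_perm_cons (hsym : ∀ u v, c u v = c v u) (hmono : MonoC3Free n c)
    {u : Fin n} : ∀ {x y : Fin n} {l : List (Fin n)}, u ∉ y :: l → (y :: l).Nodup →
    IsPCWalk c (x :: y :: l) → c y u ≠ c x y →
      ∃ l', l'.Perm (u :: l) ∧ IsPCWalk c (x :: y :: l')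
  | x, y, [], _, _, _, hu => ⟨[u], .refl _, hu.symm, trivial⟩
  | x, y, z :: l, hu, hnd, hpc, hyu => by
    simp only [List.mem_cons, not_or] at hu
    by_cases hz : c u z = c y z
    · have hyz : y ≠ z := fun h => (List.nodup_cons.1 hnd).1 (h ▸ List.mem_cons_self)
      have hyu' : c y u ≠ c u z := fun h =>
        hmono y u z (Ne.symm hu.1) hu.2.1 hyz ⟨h, h.trans hz⟩
      exact ⟨u :: z :: l, .refl _, hyu.symm, hyu', hpc.2.of_cons_of_color_eq hz⟩
    · obtain ⟨l', hperm, hpc'⟩ := IsPCWalk.exists_perm_cons hsym hmono (x := y)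
        (by simpa using hu.2) hnd.of_cons hpc.2 (by rwa [hsym])
      exact ⟨z :: l', (hperm.cons z).trans (.swap u z l), hpc.1, hpc'⟩

theorem IsPCWalk.exists_perm_append (hsym : ∀ u v, c u v = c v u) (hmono : MonoC3Free n c)
    {x y : Fin n} {l : List (Fin n)} (hpc : IsPCWalk c (x :: y :: l)) :
    ∀ {ts : List (Fin n)}, (ts ++ y :: l).Nodup → (∀ u ∈ ts, c y u ≠ c x y) →
      ∃ l', l'.Perm (ts ++ l) ∧ IsPCWalk c (x :: y :: l')
  | [], _, _ => ⟨l, .refl _, hpc⟩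
  | u :: ts, hnd, hts => by
    rw [List.cons_append, List.nodup_cons] at hnd
    obtain ⟨l₁, hl₁, hpc₁⟩ := IsPCWalk.exists_perm_append hsym hmono hpc hnd.2
      fun w hw => hts w (List.mem_cons_of_mem u hw)
    have hperm : (y :: l₁).Perm (ts ++ y :: l) := (hl₁.cons y).trans List.perm_middle.symm
    obtain ⟨l', hl', hpc'⟩ := hpc₁.exists_perm_cons hsym hmono
      (fun h => hnd.1 (hperm.subset h)) (hperm.nodup_iff.2 hnd.2) (hts u List.mem_cons_self)
    exact ⟨l', hl'.trans (hl₁.cons u), hpc'⟩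

theorem exists_spanning_pcPath_of_center_edge (hsym : ∀ u v, c u v = c v u)
    (hmono : MonoC3Free n c) :
    ∀ (s : Finset (Fin n)) {x a b : Fin n}, x ∈ s → a ∈ s → b ∈ s → x ≠ a → x ≠ b → a ≠ b →
      c a b ≠ c x a → c a b ≠ c x b → ∃ p P, (p = a ∨ p = b) ∧ (x :: p :: P).Nodup ∧
        (x :: p :: P).toFinset = s ∧ IsPCWalk c (x :: p :: P) := by
  intro s
  induction s using Finset.strongInduction with
  | H s ih =>
  intro x a b hx ha hb hxa hxb hab hcxa hcxb
  by_cases hw : ∃ w ∈ s, w ≠ a ∧ w ≠ b ∧ c b w = c a b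
  · obtain ⟨w, hw, hwa, hwb, hbw⟩ := hw
    have hxw : x ≠ w := by rintro rfl; exact hcxb (hbw.symm.trans (hsym b x))
    have haw : c a w ≠ c a b := fun h =>
      hmono a b w hab (Ne.symm hwb) (Ne.symm hwa) ⟨hbw.symm, h.symm⟩
    obtain ⟨p, P, hp, hnd, hP, hpc⟩ := ih (s.erase x) (Finset.erase_ssubset hx)
      (Finset.mem_erase.2 ⟨Ne.symm hxb, hb⟩) (Finset.mem_erase.2 ⟨Ne.symm hxa, ha⟩)
      (Finset.mem_erase.2 ⟨Ne.symm hxw, hw⟩) (Ne.symm hab) hwb.symm (Ne.symm hwa)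
      (by rwa [hsym b a]) (by rwa [hbw])
    have hbp : c b p = c a b := by rcases hp with rfl | rfl; exacts [hsym _ _, hbw]
    refine ⟨b, p :: P, Or.inr rfl, ?_, ?_, ?_⟩
    · exact List.nodup_cons.2
        ⟨fun h => Finset.notMem_erase x s (hP ▸ List.mem_toFinset.2 h), hnd⟩
    · rw [List.toFinset_cons, hP, Finset.insert_erase hx]
    · exact ⟨by rw [hbp]; exact hcxb.symm, hpc⟩
  · push Not at hw
    obtain ⟨l, hl, hpc⟩ := (isPCWalk_pair a b).exists_perm_append hsym hmono
      (ts := (((s.erase x).erase a).erase b).toList)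
      (List.nodup_append.2 ⟨Finset.nodup_toList _, List.nodup_singleton b, fun u hu w hw =>
        List.mem_singleton.1 hw ▸ (Finset.mem_erase.1 (Finset.mem_toList.1 hu)).1⟩)
      fun u hu => by
        simp only [Finset.mem_toList, Finset.mem_erase] at hu
        exact hw u hu.2.2.2 hu.2.1 hu.1
    have hperm :
        (x :: a :: b :: l).Perm (x :: a :: b :: (((s.erase x).erase a).erase b).toList) := by
      simpa using ((hl.cons b).cons a).cons x
    refine ⟨a, b :: l, Or.inl rfl, hperm.nodup_iff.2 ?_, ?_, ⟨hcxa.symm, hpc⟩⟩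
    · simp [hxa, hxb, hab, Finset.nodup_toList]
    · rw [List.toFinset_eq_of_perm _ _ hperm]
      ext u
      simp only [List.toFinset_cons, Finset.mem_insert, List.mem_toFinset, Finset.mem_toList,
        Finset.mem_erase]
      grind

end CenterEdge

section Octopus

variable {V : Type*} [DecidableEq V] {k : ℕ} {ℓ : ℕ → ℕ} {M : ℕ → ℕ → V}

def legVertices (k : ℕ) (ℓ : ℕ → ℕ) (M : ℕ → ℕ → V) : Finset V :=
  (Finset.Icc 2 k).biUnion fun i => (Finset.Icc 1 (ℓ i)).image (M i)

theorem mem_legVertices {x : V} :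
    x ∈ legVertices k ℓ M ↔ ∃ i, (2 ≤ i ∧ i ≤ k) ∧ ∃ j, (1 ≤ j ∧ j ≤ ℓ i) ∧ M i j = x := by
  simp [legVertices]

theorem center_notMem_legVertices {v : V} (hM0 : ∀ i, 2 ≤ i → i ≤ k → M i 0 = v)
    (hMinj : ∀ i, 2 ≤ i → i ≤ k → Set.InjOn (M i) (Set.Iic (ℓ i))) :
    v ∉ legVertices k ℓ M := by
  rw [mem_legVertices]
  rintro ⟨i, ⟨hi, hik⟩, j, ⟨hj, hjℓ⟩, hMj⟩
  have : j = 0 := hMinj i hi hik (Set.mem_Iic.2 hjℓ) (Set.mem_Iic.2 (Nat.zero_le _))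
    (hMj.trans (hM0 i hi hik).symm)
  omega

theorem card_legVertices (hMinj : ∀ i, 2 ≤ i → i ≤ k → Set.InjOn (M i) (Set.Iic (ℓ i)))
    (hMdisj : ∀ i i', 2 ≤ i → i ≤ k → 2 ≤ i' → i' ≤ k → i ≠ i' →
      ∀ j j', 1 ≤ j → j ≤ ℓ i → 1 ≤ j' → j' ≤ ℓ i' → M i j ≠ M i' j') :
    (legVertices k ℓ M).card = ∑ i ∈ Finset.Icc 2 k, ℓ i := by
  rw [legVertices, Finset.card_biUnion]
  · refine Finset.sum_congr rfl fun i hi => ?_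
    rw [Finset.mem_Icc] at hi
    rw [Finset.card_image_of_injOn, Nat.card_Icc, Nat.add_sub_cancel]
    exact (hMinj i hi.1 hi.2).mono fun j hj => Set.mem_Iic.2 (Finset.mem_Icc.1 hj).2
  · intro i hi i' hi' hii'
    simp only [Finset.coe_Icc, Set.mem_Icc] at hi hi'
    simp only [Function.onFun, Finset.disjoint_left, Finset.mem_image, Finset.mem_Icc]
    rintro _ ⟨j, hj, rfl⟩ ⟨j', hj', hjj'⟩
    exact hMdisj i i' hi.1 hi.2 hi'.1 hi'.2 hii' j j' hj.1 hj.2 hj'.1 hj'.2 hjj'.symm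

theorem card_compl_legVertices {n : ℕ} {M : ℕ → ℕ → Fin n} (hn : 0 < n) (hk : 1 ≤ k)
    (hMinj : ∀ i, 2 ≤ i → i ≤ k → Set.InjOn (M i) (Set.Iic (ℓ i)))
    (hMdisj : ∀ i i', 2 ≤ i → i ≤ k → 2 ≤ i' → i' ≤ k → i ≠ i' →
      ∀ j j', 1 ≤ j → j ≤ ℓ i → 1 ≤ j' → j' ≤ ℓ i' → M i j ≠ M i' j')
    (hsum : ∑ i ∈ Finset.Icc 1 k, ℓ i = n - 1) :
    (legVertices k ℓ M)ᶜ.card = ℓ 1 + 1 := by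
  have hsplit : ℓ 1 + ∑ i ∈ Finset.Icc 2 k, ℓ i = ∑ i ∈ Finset.Icc 1 k, ℓ i := by
    have := Finset.add_sum_Ioc_eq_sum_Icc (f := ℓ) hk
    rwa [← Finset.Icc_add_one_left_eq_Ioc] at this
  rw [Finset.card_compl, Fintype.card_fin, card_legVertices hMinj hMdisj]
  omega

end Octopus

theorem isPCSpanningSpider_update_one {n k : ℕ} {c : Fin n → Fin n → ℕ} {ℓ : ℕ → ℕ}
    {v : Fin n} {M : ℕ → ℕ → Fin n} {P : List (Fin n)} (hk : 1 ≤ k)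
    (hM0 : ∀ i, 2 ≤ i → i ≤ k → M i 0 = v)
    (hMinj : ∀ i, 2 ≤ i → i ≤ k → Set.InjOn (M i) (Set.Iic (ℓ i)))
    (hMdisj : ∀ i i', 2 ≤ i → i ≤ k → 2 ≤ i' → i' ≤ k → i ≠ i' →
      ∀ j j', 1 ≤ j → j ≤ ℓ i → 1 ≤ j' → j' ≤ ℓ i' → M i j ≠ M i' j')
    (hMpc : ∀ i, 2 ≤ i → i ≤ k → ∀ j : ℕ, j + 2 ≤ ℓ i →
      c (M i j) (M i (j + 1)) ≠ c (M i (j + 1)) (M i (j + 2)))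
    (hMcol : ∀ i i', 2 ≤ i → i ≤ k → 2 ≤ i' → i' ≤ k → i ≠ i' → c v (M i 1) ≠ c v (M i' 1))
    (hnd : (v :: P).Nodup) (hP : (v :: P).toFinset = (legVertices k ℓ M)ᶜ)
    (hlen : P.length = ℓ 1) (hpc : IsPCWalk c (v :: P))
    (hcol : ∀ i, 2 ≤ i → i ≤ k → c v (P.getD 0 v) ≠ c v (M i 1)) :
    IsPCSpanningSpider n k c ℓ v (Function.update M 1 fun j => (v :: P).getD j v) := by
  set L := Function.update M 1 fun j => (v :: P).getD j v
  have hL1 : ∀ j, L 1 j = (v :: P).getD j v := fun j => by simp [L]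
  have hL : ∀ i, i ≠ 1 → L i = M i := fun i hi => Function.update_of_ne hi _ _
  have hdisj :
      ∀ i, 2 ≤ i → i ≤ k → ∀ j j', j ≤ ℓ 1 → 1 ≤ j' → j' ≤ ℓ i → L 1 j ≠ M i j' := by
    intro i hi hik j j' hj hj' hj'ℓ h
    have hL1j : L 1 j ∈ (legVertices k ℓ M)ᶜ := by
      rw [hL1, ← hP, List.mem_toFinset]
      exact List.getD_mem_of_lt (by simp only [List.length_cons]; omega) v
    exact Finset.mem_compl.1 hL1j
      (h ▸ mem_legVertices.2 ⟨i, ⟨hi, hik⟩, j', ⟨hj', hj'ℓ⟩, rfl⟩)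
  have hcol1 : ∀ i, 2 ≤ i → i ≤ k → c v (L 1 1) ≠ c v (M i 1) := by
    simpa only [hL1, List.getD_cons_succ] using hcol
  refine ⟨fun i hi hik => ?_, fun i hi hik => ?_,
    fun i i' hi hik hi' hik' hii' j j' hj hjℓ hj' hj'ℓ => ?_, fun x => ?_,
    fun i hi hik j hj => ?_, fun i i' hi hik hi' hik' hii' => ?_⟩
  · rcases eq_or_ne i 1 with rfl | h1
    · exact hL1 0
    · rw [hL i h1]; exact hM0 i (by omega) hik
  · rcases eq_or_ne i 1 with rfl | h1
    · rw [funext hL1]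
      exact (hnd.injOn_getD v).mono fun j hj => by
        simp only [Set.mem_Iic, Set.mem_Iio, List.length_cons] at hj ⊢; omega
    · rw [hL i h1]; exact hMinj i (by omega) hik
  · rcases eq_or_ne i 1 with rfl | h1
    · rw [hL i' (Ne.symm hii')]; exact hdisj i' (by omega) hik' j j' hjℓ hj' hj'ℓ
    rcases eq_or_ne i' 1 with rfl | h1'
    · rw [hL i h1]; exact (hdisj i (by omega) hik j' j hj'ℓ hj hjℓ).symm
    rw [hL i h1, hL i' h1']
    exact hMdisj i i' (by omega) hik (by omega) hik' hii' j j' hj hjℓ hj' hj'ℓ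
  · by_cases hx : x ∈ legVertices k ℓ M
    · obtain ⟨i, ⟨hi, hik⟩, j, ⟨-, hj⟩, rfl⟩ := mem_legVertices.1 hx
      exact ⟨i, j, by omega, hik, hj, by rw [hL i (by omega)]⟩
    · rw [← Finset.mem_compl, ← hP, List.mem_toFinset, List.mem_iff_getElem] at hx
      obtain ⟨j, hj, rfl⟩ := hx
      refine ⟨1, j, le_rfl, hk, by simp only [List.length_cons] at hj; omega, ?_⟩
      rw [hL1, List.getD_eq_getElem]
  · rcases eq_or_ne i 1 with rfl | h1
    · simpa only [hL1] using hpc.getD v j (by simp only [List.length_cons]; omega)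
    · simpa only [hL i h1] using hMpc i (by omega) hik j hj
  · rcases eq_or_ne i 1 with rfl | h1
    · rw [hL i' (Ne.symm hii')]; exact hcol1 i' (by omega) hik'
    rcases eq_or_ne i' 1 with rfl | h1'
    · rw [hL i h1]; exact (hcol1 i (by omega) hik).symm
    rw [hL i h1, hL i' h1']
    exact hMcol i i' (by omega) hik (by omega) hik' hii'

theorem pc_spider_of_nice_octopus_general (k n : ℕ) (hk : 3 ≤ k) (c : Fin n → Fin n → ℕ)
    (hsym : ∀ u v, c u v = c v u) (hmono : MonoC3Free n c)
    (ℓ : ℕ → ℕ)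
    (hsum : ∑ i ∈ Finset.Icc 1 k, ℓ i = n - 1)
    (hoct : ∃ (v a b : Fin n) (M : ℕ → ℕ → Fin n),
      a ≠ b ∧ a ≠ v ∧ b ≠ v ∧
      (∀ i, 2 ≤ i → i ≤ k → M i 0 = v) ∧
      (∀ i, 2 ≤ i → i ≤ k → Set.InjOn (M i) (Set.Iic (ℓ i))) ∧
      (∀ i i', 2 ≤ i → i ≤ k → 2 ≤ i' → i' ≤ k → i ≠ i' →
        ∀ j j', 1 ≤ j → j ≤ ℓ i → 1 ≤ j' → j' ≤ ℓ i' → M i j ≠ M i' j') ∧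
      (∀ i, 2 ≤ i → i ≤ k → ∀ j ≤ ℓ i, M i j ≠ a ∧ M i j ≠ b) ∧
      (∀ i, 2 ≤ i → i ≤ k → ∀ j : ℕ, j + 2 ≤ ℓ i →
        c (M i j) (M i (j + 1)) ≠ c (M i (j + 1)) (M i (j + 2))) ∧
      (∀ i i', 2 ≤ i → i ≤ k → 2 ≤ i' → i' ≤ k → i ≠ i' → c v (M i 1) ≠ c v (M i' 1)) ∧
      c a b ≠ c v a ∧ c a b ≠ c v b ∧
      (∀ i, 2 ≤ i → i ≤ k → c v (M i 1) ≠ c v a ∧ c v (M i 1) ≠ c v b)) :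
    ∃ (v : Fin n) (L : ℕ → ℕ → Fin n), IsPCSpanningSpider n k c ℓ v L := by
  obtain ⟨v, a, b, M, hab, hav, hbv, hM0, hMinj, hMdisj, hMab, hMpc, hMcol, hcab1, hcab2,
    hshov⟩ := hoct
  have hv := center_notMem_legVertices hM0 hMinj
  have hout : a ∉ legVertices k ℓ M ∧ b ∉ legVertices k ℓ M := by
    simp only [mem_legVertices, not_exists, not_and]
    exact ⟨fun i hi j hj => (hMab i hi.1 hi.2 j hj.2).1,
      fun i hi j hj => (hMab i hi.1 hi.2 j hj.2).2⟩
  obtain ⟨p, P, hp, hnd, hP, hpc⟩ := exists_spanning_pcPath_of_center_edge hsym hmono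
    (legVertices k ℓ M)ᶜ (Finset.mem_compl.2 hv) (Finset.mem_compl.2 hout.1)
    (Finset.mem_compl.2 hout.2) hav.symm hbv.symm hab hcab1 hcab2
  have hlen : (v :: p :: P).length = ℓ 1 + 1 := by
    rw [← List.toFinset_card_of_nodup hnd, hP]
    exact card_compl_legVertices v.pos (by omega) hMinj hMdisj hsum
  refine ⟨v, _, isPCSpanningSpider_update_one (by omega) hM0 hMinj hMdisj hMpc hMcol hnd hP
    (Nat.succ_injective hlen) hpc fun i hi hik => ?_⟩
  rcases hp with rfl | rfl
  exacts [(hshov i hi hik).1.symm, (hshov i hi hik).2.symm]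

/-- Let `k ≥ 3` and let `G` be a mono-`C3`-free edge-colored `K_n`.
Let `ℓ 1 ≥ ℓ 2 ≥ ⋯ ≥ ℓ k ≥ 1` with `ℓ 1 ≥ 2` and `ℓ 1 + ⋯ + ℓ k = n - 1`.  If `G`
contains a nice octopus `O*_{ℓ 2, …, ℓ k}` — a properly colored spider with center `v`
and `k - 1` legs `M i` of lengths `ℓ i` (`2 ≤ i ≤ k`) together with a triangle `v a b`
disjoint from the legs such that `ab` is a center edge of the triangle and, for each
leg, the triangle together with that leg forms a nice shovel (the color of the first
leg edge differs from the colors of both triangle edges at `v`) — then `G` contains a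
properly colored spanning spider with legs of lengths `ℓ 1, ℓ 2, …, ℓ k`. -/
theorem pc_spider_of_nice_octopus (k n : ℕ) (hk : 3 ≤ k) (c : Fin n → Fin n → ℕ)
    (hsym : ∀ u v, c u v = c v u) (hmono : MonoC3Free n c)
    (ℓ : ℕ → ℕ)
    (hpos : ∀ i, 1 ≤ i → i ≤ k → 1 ≤ ℓ i)
    (hdec : ∀ i j, 1 ≤ i → i ≤ j → j ≤ k → ℓ j ≤ ℓ i)
    (hl1 : 2 ≤ ℓ 1)
    (hsum : ∑ i ∈ Finset.Icc 1 k, ℓ i = n - 1)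
    (hoct : ∃ (v a b : Fin n) (M : ℕ → ℕ → Fin n),
      a ≠ b ∧ a ≠ v ∧ b ≠ v ∧
      (∀ i, 2 ≤ i → i ≤ k → M i 0 = v) ∧
      (∀ i, 2 ≤ i → i ≤ k → Set.InjOn (M i) (Set.Iic (ℓ i))) ∧
      (∀ i i', 2 ≤ i → i ≤ k → 2 ≤ i' → i' ≤ k → i ≠ i' →
        ∀ j j', 1 ≤ j → j ≤ ℓ i → 1 ≤ j' → j' ≤ ℓ i' → M i j ≠ M i' j') ∧
      (∀ i, 2 ≤ i → i ≤ k → ∀ j ≤ ℓ i, M i j ≠ a ∧ M i j ≠ b) ∧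
      (∀ i, 2 ≤ i → i ≤ k → ∀ j : ℕ, j + 2 ≤ ℓ i →
        c (M i j) (M i (j + 1)) ≠ c (M i (j + 1)) (M i (j + 2))) ∧
      (∀ i i', 2 ≤ i → i ≤ k → 2 ≤ i' → i' ≤ k → i ≠ i' → c v (M i 1) ≠ c v (M i' 1)) ∧
      c a b ≠ c v a ∧ c a b ≠ c v b ∧
      (∀ i, 2 ≤ i → i ≤ k → c v (M i 1) ≠ c v a ∧ c v (M i 1) ≠ c v b)) :
    ∃ (v : Fin n) (L : ℕ → ℕ → Fin n), IsPCSpanningSpider n k c ℓ v L :=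
  pc_spider_of_nice_octopus_general k n hk c hsym hmono ℓ hsum hoct
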